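/- arXiv:1708.09133 — 3 statements merged into one kernel-verified Lean document; each statement's English description precedes it below -/
import Mathlib

section
/- Convergence in probability is not preserved by regular summability methods: there exists a regular matrix A (e.g., the Cesàro matrix) and a sequence of random variables (X_n) with X_n → 0 in probability such that (Ax)_n does not converge to 0 in probability. -/
/-!
Row `n` of the matrix averages the block of indices `[2 ^ n, 2 ^ (n + 1))`. The variable with
index `2 ^ n + m` is `2 ^ n` times the indicator of the dyadic interval `[m / 2 ^ n, (m + 1) / 2 ^ n)`:
it vanishes off a set of measure `2⁻¹ ^ n`, so these variables tend to `0` in probability, but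
the `2 ^ n` intervals of level `n` tile `[0, 1)`, so every row average is identically `1` there.
-/

open MeasureTheory Filter Topology

lemma mem_Ico_div_iff_floor_eq {N : ℕ} (hN : 0 < N) {x : ℝ} (hx : 0 ≤ x) (m : ℕ) :
    x ∈ Set.Ico ((m : ℝ) / N) ((m + 1) / N) ↔ ⌊N * x⌋₊ = m := by
  have hN' : (0 : ℝ) < N := by exact_mod_cast hN
  rw [Nat.floor_eq_iff (by positivity), Set.mem_Ico, div_le_iff₀ hN', lt_div_iff₀ hN',
    mul_comm x]

theorem sum_indicator_Ico_div_eq_one {N : ℕ} (hN : 0 < N) {x : ℝ} (hx : x ∈ Set.Ico (0 : ℝ) 1) :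
    ∑ m ∈ Finset.range N, (Set.Ico ((m : ℝ) / N) ((m + 1) / N)).indicator 1 x = (1 : ℝ) := by
  have hfloor : ⌊N * x⌋₊ < N := by
    rw [Nat.floor_lt (mul_nonneg N.cast_nonneg hx.1)]
    nlinarith [hx.2, (Nat.cast_pos.2 hN : (0 : ℝ) < N)]
  rw [Finset.sum_eq_single_of_mem _ (Finset.mem_range.2 hfloor)]
  · exact Set.indicator_of_mem ((mem_Ico_div_iff_floor_eq hN hx.1 _).2 rfl) _
  · intro m _ hm
    exact Set.indicator_of_notMem (fun h => hm ((mem_Ico_div_iff_floor_eq hN hx.1 m).1 h).symm) _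

def dyadicInterval (k m : ℕ) : Set ℝ :=
  Set.Ico (m / 2 ^ k) ((m + 1) / 2 ^ k)

lemma volume_dyadicInterval (k m : ℕ) :
    volume (dyadicInterval k m) = ENNReal.ofReal (2 ^ k)⁻¹ := by
  rw [dyadicInterval, Real.volume_Ico]
  congr 1
  field_simp
  ring

noncomputable def dyadicBlockMean (n j : ℕ) : ℝ :=
  if j ∈ Finset.Ico (2 ^ n) (2 ^ (n + 1)) then (2 ^ n)⁻¹ else 0

lemma dyadicBlockMean_nonneg (n j : ℕ) : 0 ≤ dyadicBlockMean n j := by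
  unfold dyadicBlockMean
  split_ifs <;> positivity

lemma dyadicBlockMean_eq_zero {n j : ℕ} (hj : j ∉ Finset.Ico (2 ^ n) (2 ^ (n + 1))) :
    dyadicBlockMean n j = 0 :=
  if_neg hj

theorem tsum_dyadicBlockMean_mul (n : ℕ) (f : ℕ → ℝ) :
    ∑' j, dyadicBlockMean n j * f j = (2 ^ n)⁻¹ * ∑ m ∈ Finset.range (2 ^ n), f (2 ^ n + m) := by
  have hblock : 2 ^ (n + 1) - 2 ^ n = 2 ^ n := by rw [pow_succ]; omega
  rw [tsum_eq_sum (s := Finset.Ico (2 ^ n) (2 ^ (n + 1)))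
      (fun j hj => by rw [dyadicBlockMean_eq_zero hj, zero_mul]),
    Finset.sum_Ico_eq_sum_range, hblock, Finset.mul_sum]
  refine Finset.sum_congr rfl fun m hm => ?_
  rw [Finset.mem_range] at hm
  rw [dyadicBlockMean, if_pos (by rw [Finset.mem_Ico, pow_succ]; omega)]

lemma tsum_dyadicBlockMean (n : ℕ) : ∑' j, dyadicBlockMean n j = 1 := by
  simpa using tsum_dyadicBlockMean_mul n 1

lemma summable_abs_dyadicBlockMean (n : ℕ) : Summable fun j => |dyadicBlockMean n j| :=
  summable_of_ne_finset_zero (s := Finset.Ico (2 ^ n) (2 ^ (n + 1)))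
    (fun j hj => by rw [dyadicBlockMean_eq_zero hj, abs_zero])

lemma tsum_abs_dyadicBlockMean (n : ℕ) : ∑' j, |dyadicBlockMean n j| = 1 := by
  simp only [abs_of_nonneg (dyadicBlockMean_nonneg _ _), tsum_dyadicBlockMean]

lemma tendsto_dyadicBlockMean_atTop (j : ℕ) :
    Tendsto (fun n => dyadicBlockMean n j) atTop (𝓝 0) := by
  refine tendsto_const_nhds.congr' ?_
  filter_upwards [eventually_ge_atTop j] with n hn
  refine (dyadicBlockMean_eq_zero fun hj => ?_).symm
  have := (Finset.mem_Ico.1 hj).1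
  have := (Nat.lt_two_pow_self (n := j)).trans_le (Nat.pow_le_pow_right two_pos hn)
  omega

noncomputable def typewriter (j : ℕ) : ℝ → ℝ :=
  (dyadicInterval (Nat.log 2 j) (j - 2 ^ Nat.log 2 j)).indicator fun _ => 2 ^ Nat.log 2 j

lemma measurable_typewriter (j : ℕ) : Measurable (typewriter j) :=
  measurable_const.indicator measurableSet_Ico

lemma typewriter_two_pow_add {n m : ℕ} (hm : m < 2 ^ n) :
    typewriter (2 ^ n + m) = (dyadicInterval n m).indicator fun _ => 2 ^ n := by
  have hlog : Nat.log 2 (2 ^ n + m) = n :=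
    Nat.log_eq_of_pow_le_of_lt_pow (by omega) (by rw [pow_succ]; omega)
  simp only [typewriter, hlog, Nat.add_sub_cancel_left]

lemma volume_lt_abs_typewriter_le (j : ℕ) {lam : ℝ} (hlam : 0 < lam) :
    volume {ω | lam < |typewriter j ω|} ≤ ENNReal.ofReal (2 ^ Nat.log 2 j)⁻¹ := by
  rw [← volume_dyadicInterval]
  refine measure_mono fun ω (hω : lam < |typewriter j ω|) =>
    Set.mem_of_indicator_ne_zero (show typewriter j ω ≠ 0 from fun h0 => ?_)
  rw [h0, abs_zero] at hω
  exact hlam.not_gt hω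

lemma tendsto_log_two_atTop : Tendsto (Nat.log 2) atTop atTop :=
  tendsto_atTop_atTop.2 fun k => ⟨2 ^ k, fun _ hj => Nat.le_log_of_pow_le one_lt_two hj⟩

theorem tendsto_volume_lt_abs_typewriter {lam : ℝ} (hlam : 0 < lam) :
    Tendsto (fun j => (volume.restrict (Set.Ico (0 : ℝ) 1)) {ω | lam < |typewriter j ω|})
      atTop (𝓝 0) := by
  have hbound : Tendsto (fun j => ENNReal.ofReal (2 ^ Nat.log 2 j)⁻¹) atTop (𝓝 0) := by
    rw [← ENNReal.ofReal_zero]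
    exact ENNReal.tendsto_ofReal <| tendsto_inv_atTop_zero.comp <|
      (tendsto_pow_atTop_atTop_of_one_lt one_lt_two).comp tendsto_log_two_atTop
  refine tendsto_of_tendsto_of_tendsto_of_le_of_le tendsto_const_nhds hbound (fun _ => zero_le)
    fun j => ?_
  exact (Measure.restrict_apply_le _ _).trans (volume_lt_abs_typewriter_le j hlam)

theorem tsum_dyadicBlockMean_mul_typewriter (n : ℕ) {ω : ℝ} (hω : ω ∈ Set.Ico (0 : ℝ) 1) :
    ∑' j, dyadicBlockMean n j * typewriter j ω = 1 := by
  rw [tsum_dyadicBlockMean_mul, Finset.mul_sum]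
  convert sum_indicator_Ico_div_eq_one (N := 2 ^ n) (by positivity) hω using 2 with m hm
  have hinterval :
      Set.Ico ((m : ℝ) / (2 ^ n : ℕ)) ((m + 1) / (2 ^ n : ℕ)) = dyadicInterval n m := by
    push_cast [dyadicInterval]
    rfl
  rw [typewriter_two_pow_add (Finset.mem_range.1 hm), hinterval]
  by_cases h : ω ∈ dyadicInterval n m <;> simp [h]

/-- Convergence in probability is not preserved by regular summability methods:
there are a regular matrix `a` and random variables `X n → 0` in probability
(on the probability space `[0,1)` with Lebesgue measure) whose transforms
`(Ax)_i = ∑' j, a i j * X j` do not converge to `0` in probability. -/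
theorem stmt_3 :
    ∃ (a : ℕ → ℕ → ℝ) (M : ℝ) (X : ℕ → ℝ → ℝ),
      (∀ i, Summable fun j => |a i j|) ∧
      (∀ i, (∑' j, |a i j|) ≤ M) ∧
      (∀ j, Tendsto (fun i => a i j) atTop (𝓝 0)) ∧
      Tendsto (fun i => ∑' j, a i j) atTop (𝓝 1) ∧
      (∀ n, Measurable (X n)) ∧
      (∀ lam : ℝ, 0 < lam →
        Tendsto (fun n => (volume.restrict (Set.Ico (0 : ℝ) 1))
            {ω | lam < |X n ω|}) atTop (𝓝 0)) ∧
      ¬ (∀ lam : ℝ, 0 < lam →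
        Tendsto (fun n => (volume.restrict (Set.Ico (0 : ℝ) 1))
            {ω | lam < |∑' j, a n j * X j ω|}) atTop (𝓝 0)) := by
  refine ⟨dyadicBlockMean, 1, typewriter, summable_abs_dyadicBlockMean,
    fun n => (tsum_abs_dyadicBlockMean n).le, tendsto_dyadicBlockMean_atTop,
    by simp only [tsum_dyadicBlockMean, tendsto_const_nhds], measurable_typewriter,
    fun _ => tendsto_volume_lt_abs_typewriter, fun h => ?_⟩
  have hfull : ∀ n, (volume.restrict (Set.Ico (0 : ℝ) 1))
      {ω | 1 / 2 < |∑' j, dyadicBlockMean n j * typewriter j ω|} = 1 := by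
    intro n
    rw [Measure.restrict_apply_superset fun ω hω => ?_, Real.volume_Ico]
    · norm_num
    · show (1 / 2 : ℝ) < |_|
      rw [tsum_dyadicBlockMean_mul_typewriter n hω]
      norm_num
  have h_half := h (1 / 2) one_half_pos
  simp only [hfull] at h_half
  exact one_ne_zero (tendsto_nhds_unique tendsto_const_nhds h_half)
end

section
/- If real random variables X_n, X_∞ are finite almost everywhere and X_n converges to X_∞ almost surely in the sense that for every λ > 0, P(sup_{m ≥ n} |X_m − X_∞| > λ) → 0, then the Cesàro means (Σ_{i=1}^n X_i)/n converge to X_∞ in the same sense. -/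
/-!
For measurable functions on a finite measure space, the tail condition
`μ {∃ m ≥ n, λ < dist (X m) X∞} → 0` for all `λ > 0` is equivalent to almost everywhere convergence,
since the tail sets decrease to the set where `X m` is frequently `λ`-far from `X∞`. Pointwise,
Cesàro means of a convergent real sequence converge to the same limit.
-/

open MeasureTheory Filter Topology Metric

section TailDeviation

variable {Ω E : Type*} [PseudoMetricSpace E] {X : ℕ → Ω → E} {Xinf : Ω → E}

lemma iInter_tail_dist_eq (lam : ℝ) :
    ⋂ n, {ω | ∃ m, n ≤ m ∧ lam < dist (X m ω) (Xinf ω)} =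
      {ω | ∃ᶠ m in atTop, lam < dist (X m ω) (Xinf ω)} := by
  ext ω
  simp [frequently_atTop]

variable [MeasurableSpace Ω] {μ : Measure Ω} {lam : ℝ}

lemma ae_eventually_dist_le_of_tendsto_measure_tail
    (h : Tendsto (fun n => μ {ω | ∃ m, n ≤ m ∧ lam < dist (X m ω) (Xinf ω)}) atTop (𝓝 0)) :
    ∀ᵐ ω ∂μ, ∀ᶠ m in atTop, dist (X m ω) (Xinf ω) ≤ lam := by
  simp only [ae_iff, not_eventually, not_le, ← iInter_tail_dist_eq]
  exact le_antisymm (ge_of_tendsto' h fun n => measure_mono (Set.iInter_subset _ n)) bot_le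

lemma ae_tendsto_of_tendsto_measure_tail
    (h : ∀ lam : ℝ, 0 < lam →
      Tendsto (fun n => μ {ω | ∃ m, n ≤ m ∧ lam < dist (X m ω) (Xinf ω)}) atTop (𝓝 0)) :
    ∀ᵐ ω ∂μ, Tendsto (X · ω) atTop (𝓝 (Xinf ω)) := by
  have hk := ae_all_iff.2 fun k : ℕ =>
    ae_eventually_dist_le_of_tendsto_measure_tail (h (1 / (k + 1)) (by positivity))
  filter_upwards [hk] with ω hω
  exact nhds_basis_closedBall_inv_nat_succ.tendsto_right_iff.2 fun k _ => hω k

lemma measurableSet_tail_dist [MeasurableSpace E] [OpensMeasurableSpace E]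
    [SecondCountableTopology E] (hX : ∀ n, Measurable (X n)) (hXinf : Measurable Xinf)
    (lam : ℝ) (n : ℕ) :
    MeasurableSet {ω | ∃ m, n ≤ m ∧ lam < dist (X m ω) (Xinf ω)} := by
  simp only [Set.ofPred_exists, Set.ofPred_and]
  exact .iUnion fun m =>
    (MeasurableSet.const _).inter (measurableSet_lt measurable_const ((hX m).dist hXinf))

lemma tendsto_measure_tail_of_ae_tendsto [IsFiniteMeasure μ] [MeasurableSpace E]
    [OpensMeasurableSpace E] [SecondCountableTopology E]
    (hX : ∀ n, Measurable (X n)) (hXinf : Measurable Xinf)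
    (h : ∀ᵐ ω ∂μ, Tendsto (X · ω) atTop (𝓝 (Xinf ω))) (hlam : 0 < lam) :
    Tendsto (fun n => μ {ω | ∃ m, n ≤ m ∧ lam < dist (X m ω) (Xinf ω)}) atTop (𝓝 0) := by
  have hnull : μ {ω | ∃ᶠ m in atTop, lam < dist (X m ω) (Xinf ω)} = 0 := by
    rw [← compl_mem_ae_iff]
    filter_upwards [h] with ω hω
    simp only [Set.mem_compl_iff, Set.mem_ofPred_eq, not_frequently, not_lt]
    exact hω.eventually (closedBall_mem_nhds _ hlam)
  have hanti : Antitone fun n => {ω | ∃ m, n ≤ m ∧ lam < dist (X m ω) (Xinf ω)} :=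
    fun a b hab ω ⟨m, hm, hlt⟩ => ⟨m, hab.trans hm, hlt⟩
  have := tendsto_measure_iInter_atTop
    (fun n => (measurableSet_tail_dist hX hXinf lam n).nullMeasurableSet) hanti
    ⟨0, measure_ne_top μ _⟩
  rwa [iInter_tail_dist_eq, hnull] at this

end TailDeviation

lemma Filter.Tendsto.cesaro_Icc {u : ℕ → ℝ} {l : ℝ} (h : Tendsto u atTop (𝓝 l)) :
    Tendsto (fun n : ℕ => (∑ k ∈ Finset.Icc 1 n, u k) / n) atTop (𝓝 l) := by
  refine (h.comp (tendsto_add_atTop_nat 1)).cesaro.congr fun n => ?_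
  rw [div_eq_inv_mul, Finset.range_eq_Ico, Function.comp_def, Finset.sum_Ico_add' u 0 n 1,
    zero_add, Finset.Ico_add_one_right_eq_Icc]

/-- Cesàro means preserve almost sure convergence in the strong sense:
if for every `λ > 0`, `P(sup_{m ≥ n} |X_m − X_∞| > λ) → 0`, then the same holds
for the Cesàro means `(∑_{i=1}^n X_i)/n`. -/
theorem stmt_9
    {Ω : Type*} [MeasurableSpace Ω] (μ : Measure Ω) [IsProbabilityMeasure μ]
    (X : ℕ → Ω → ℝ) (Xinf : Ω → ℝ)
    (hX : ∀ n, Measurable (X n)) (hXinf : Measurable Xinf)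
    (has : ∀ lam : ℝ, 0 < lam →
      Tendsto (fun n => μ {ω | ∃ m, n ≤ m ∧ lam < |X m ω - Xinf ω|}) atTop (𝓝 0)) :
    ∀ lam : ℝ, 0 < lam →
      Tendsto (fun n =>
          μ {ω | ∃ i, n ≤ i ∧
              lam < |(∑ k ∈ Finset.Icc 1 i, X k ω) / i - Xinf ω|}) atTop (𝓝 0) := by
  have hmean : ∀ i : ℕ, Measurable fun ω => (∑ k ∈ Finset.Icc 1 i, X k ω) / i := fun i =>
    (Finset.measurable_sum _ fun k _ => hX k).div_const _
  simp only [← Real.dist_eq] at has ⊢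
  intro lam hlam
  refine tendsto_measure_tail_of_ae_tendsto hmean hXinf ?_ hlam
  filter_upwards [ae_tendsto_of_tendsto_measure_tail has] with ω hω
  exact hω.cesaro_Icc
end

section
/- For the Cesàro matrix a_{nj} = 1/n (1 ≤ j ≤ n) and the random variables X_n on [0,1) defined by X_{2^m+i}(ω) = 4^{m+i} on [i/2^m,(i+1)/2^m) and 0 elsewhere (0 ≤ i < 2^m), for every n ≥ 16 of the form n = 2^m + i one has P((Σ_{j=1}^n X_j)/n > 1) = 1. -/
/-!
Write `n = 2^m + i` with `m ≥ 4`. For every `ω ∈ [0,1)` one of the `2^(m-1)` dyadic intervals of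
level `m - 1` contains `ω`, so some `X (2^(m-1) + i')` with `2^(m-1) + i' < 2^m ≤ n` takes the value
`4^(m-1+i') ≥ 4^(m-1) > 2^(m+1) > n` at `ω`. All terms are nonnegative, so the partial sum exceeds
`n` on all of `[0,1)`.
-/

open MeasureTheory

def IsScaledTypewriter (X : ℕ → ℝ → ℝ) : Prop :=
  ∀ m i : ℕ, i < 2 ^ m → ∀ ω : ℝ,
    X (2 ^ m + i) ω =
      if ω ∈ Set.Ico ((i : ℝ) / 2 ^ m) (((i : ℝ) + 1) / 2 ^ m) then (4 : ℝ) ^ (m + i) else 0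

lemma Nat.exists_eq_two_pow_add {j : ℕ} (hj : 0 < j) : ∃ m i, i < 2 ^ m ∧ j = 2 ^ m + i := by
  have hle : 2 ^ j.log2 ≤ j := Nat.log2_self_le hj.ne'
  have hlt : j < 2 ^ (j.log2 + 1) := Nat.lt_log2_self
  exact ⟨j.log2, j - 2 ^ j.log2, by rw [pow_succ] at hlt; omega, by omega⟩

lemma exists_mem_Ico_div {ω : ℝ} (hω : ω ∈ Set.Ico (0 : ℝ) 1) {N : ℝ} (hN : 0 < N) :
    ∃ i : ℕ, (i : ℝ) < N ∧ ω ∈ Set.Ico ((i : ℝ) / N) (((i : ℝ) + 1) / N) := by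
  obtain ⟨hω0, hω1⟩ := hω
  have hfloor : (⌊ω * N⌋₊ : ℝ) ≤ ω * N := Nat.floor_le (by positivity)
  have hfloor' : ω * N < ⌊ω * N⌋₊ + 1 := Nat.lt_floor_add_one _
  refine ⟨⌊ω * N⌋₊, by nlinarith, ?_, ?_⟩
  · rw [div_le_iff₀ hN]; linarith
  · rw [lt_div_iff₀ hN]; linarith

lemma two_pow_succ_add_lt_four_pow {m i : ℕ} (hi : i < 2 ^ (m + 1)) (h16 : 16 ≤ 2 ^ (m + 1) + i) :
    2 ^ (m + 1) + i < 4 ^ m := by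
  have hm : 3 ≤ m := by
    by_contra! hm
    have : 2 ^ (m + 1) ≤ 2 ^ 3 := Nat.pow_le_pow_right two_pos (by omega)
    omega
  calc 2 ^ (m + 1) + i < 2 ^ (m + 2) := by rw [pow_succ 2 (m + 1)]; omega
    _ ≤ 2 ^ (2 * m) := Nat.pow_le_pow_right two_pos (by omega)
    _ = 4 ^ m := by rw [pow_mul]; norm_num

namespace IsScaledTypewriter

variable {X : ℕ → ℝ → ℝ}

lemma nonneg (hX : IsScaledTypewriter X) {j : ℕ} (hj : 0 < j) (ω : ℝ) : 0 ≤ X j ω := by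
  obtain ⟨m, i, hi, rfl⟩ := Nat.exists_eq_two_pow_add hj
  rw [hX m i hi]
  split_ifs <;> positivity

lemma four_pow_le_sum (hX : IsScaledTypewriter X) {ω : ℝ} (hω : ω ∈ Set.Ico (0 : ℝ) 1) {m n : ℕ}
    (hn : 2 ^ (m + 1) ≤ n) : (4 : ℝ) ^ m ≤ ∑ j ∈ Finset.Icc 1 n, X j ω := by
  obtain ⟨i, hi, hmem⟩ := exists_mem_Ico_div hω (N := 2 ^ m) (by positivity)
  have hi : i < 2 ^ m := by exact_mod_cast hi
  have hidx : 2 ^ m + i ∈ Finset.Icc 1 n := by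
    rw [Finset.mem_Icc, pow_succ] at *
    constructor <;> omega
  calc (4 : ℝ) ^ m ≤ 4 ^ (m + i) := pow_le_pow_right₀ (by norm_num) (by omega)
    _ = X (2 ^ m + i) ω := by rw [hX m i hi, if_pos hmem]
    _ ≤ ∑ j ∈ Finset.Icc 1 n, X j ω :=
      Finset.single_le_sum (fun j hj => hX.nonneg (Finset.mem_Icc.mp hj).1 ω) hidx

end IsScaledTypewriter

/-- For the random variables `X (2^m + i) = 4^(m+i)` on `[i/2^m, (i+1)/2^m)`
and `0` elsewhere, on `[0,1)` with Lebesgue measure, for every `n ≥ 16` of the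
form `n = 2^m + i` with `0 ≤ i < 2^m`, the Cesàro mean exceeds `1` with
probability one. -/
theorem stmt_16
    (X : ℕ → ℝ → ℝ)
    (hX : ∀ m i : ℕ, i < 2 ^ m → ∀ ω : ℝ,
      X (2 ^ m + i) ω =
        if ω ∈ Set.Ico ((i : ℝ) / 2 ^ m) (((i : ℝ) + 1) / 2 ^ m)
          then (4 : ℝ) ^ (m + i) else 0) :
    ∀ m i n : ℕ, i < 2 ^ m → n = 2 ^ m + i → 16 ≤ n →
      (volume.restrict (Set.Ico (0 : ℝ) 1))
          {ω | 1 < (∑ j ∈ Finset.Icc 1 n, X j ω) / n} = 1 := by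
  intro m i n hi hn h16
  obtain ⟨m, rfl⟩ : ∃ k, m = k + 1 :=
    Nat.exists_eq_add_one.mpr (Nat.pos_of_ne_zero (by rintro rfl; omega))
  have hn_lt : (n : ℝ) < 4 ^ m := by
    subst hn; exact_mod_cast two_pow_succ_add_lt_four_pow hi h16
  have hsubset : Set.Ico (0 : ℝ) 1 ⊆ {ω | 1 < (∑ j ∈ Finset.Icc 1 n, X j ω) / n} := by
    intro ω hω
    rw [Set.mem_ofPred_eq, one_lt_div (by positivity)]
    exact hn_lt.trans_le (IsScaledTypewriter.four_pow_le_sum hX hω (by omega))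
  rw [Measure.restrict_apply_superset hsubset, Real.volume_Ico]
  norm_num
end
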